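/- arXiv:1801.09796 — 5 statements merged into one kernel-verified Lean document; each statement's English description precedes it below -/
import Mathlib

section
/- Let {v0, v1, v2} be vectors in R^2 with v0 + v1 + v2 = 0, all pairwise inner products ≤ 0, and ||v1|| ≤ ||v2|| ≤ ||v0||, with v1 ≠ 0. Then 2|⟨v1, v2⟩| ≤ ⟨v1, v1⟩ and ⟨v1,v1⟩ ≤ ⟨v2,v2⟩, i.e., {v1, v2} satisfies the two-dimensional Minkowski reduction conditions. -/
open scoped InnerProductSpace

theorem stmt3 (v0 v1 v2 : EuclideanSpace ℝ (Fin 2))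
    (hsum : v0 + v1 + v2 = 0)
    (h01 : ⟪v0, v1⟫_ℝ ≤ 0) (h02 : ⟪v0, v2⟫_ℝ ≤ 0) (h12 : ⟪v1, v2⟫_ℝ ≤ 0)
    (hn12 : ‖v1‖ ≤ ‖v2‖) (hn20 : ‖v2‖ ≤ ‖v0‖) (hne : v1 ≠ 0) :
    2 * |⟪v1, v2⟫_ℝ| ≤ ⟪v1, v1⟫_ℝ ∧ ⟪v1, v1⟫_ℝ ≤ ⟪v2, v2⟫_ℝ := by
  have h0 : v0 = -(v1 + v2) := by
    rw [add_assoc] at hsum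
    exact eq_neg_of_add_eq_zero_left hsum
  have hn0 : ‖v0‖ = ‖v1 + v2‖ := by rw [h0, norm_neg]
  have hsq : ‖v2‖ ^ 2 ≤ ‖v0‖ ^ 2 := by
    exact pow_le_pow_left₀ (norm_nonneg _) hn20 2
  have hexp : ‖v1 + v2‖ ^ 2 = ‖v1‖ ^ 2 + 2 * ⟪v1, v2⟫_ℝ + ‖v2‖ ^ 2 :=
    norm_add_sq_real v1 v2
  have h1 : ⟪v1, v1⟫_ℝ = ‖v1‖ ^ 2 := real_inner_self_eq_norm_sq v1
  have h2 : ⟪v2, v2⟫_ℝ = ‖v2‖ ^ 2 := real_inner_self_eq_norm_sq v2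
  have habs : |⟪v1, v2⟫_ℝ| = -⟪v1, v2⟫_ℝ := abs_of_nonpos h12
  constructor
  · rw [hn0, hexp] at hsq
    linarith
  · nlinarith [norm_nonneg v1, norm_nonneg v2]
end

section
/- Let {v0, v1, v2, v3} be vectors in R^3 with v0 + v1 + v2 + v3 = 0, all pairwise inner products ≤ 0, v1 ≠ 0, and ||v1|| ≤ ||v2|| ≤ ||v3|| ≤ ||v0||. Then 2|±⟨v1,v2⟩ ± ⟨v1,v3⟩ ± ⟨v2,v3⟩| ≤ ⟨v1,v1⟩ + ⟨v2,v2⟩ for every choice of signs. -/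
open scoped InnerProductSpace

theorem stmt6 (v0 v1 v2 v3 : EuclideanSpace ℝ (Fin 3))
    (hsum : v0 + v1 + v2 + v3 = 0)
    (h01 : ⟪v0, v1⟫_ℝ ≤ 0) (h02 : ⟪v0, v2⟫_ℝ ≤ 0) (h03 : ⟪v0, v3⟫_ℝ ≤ 0)
    (h12 : ⟪v1, v2⟫_ℝ ≤ 0) (h13 : ⟪v1, v3⟫_ℝ ≤ 0) (h23 : ⟪v2, v3⟫_ℝ ≤ 0)
    (hne : v1 ≠ 0)
    (hn12 : ‖v1‖ ≤ ‖v2‖) (hn23 : ‖v2‖ ≤ ‖v3‖) (hn30 : ‖v3‖ ≤ ‖v0‖) :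
    ∀ e1 e2 e3 : ℝ, (e1 = 1 ∨ e1 = -1) → (e2 = 1 ∨ e2 = -1) → (e3 = 1 ∨ e3 = -1) →
      2 * |e1 * ⟪v1, v2⟫_ℝ + e2 * ⟪v1, v3⟫_ℝ + e3 * ⟪v2, v3⟫_ℝ| ≤
        ⟪v1, v1⟫_ℝ + ⟪v2, v2⟫_ℝ := by
  intro e1 e2 e3 he1 he2 he3
  have h0 : v0 = -v1 - v2 - v3 := by
    have : v0 + (v1 + v2 + v3) = 0 := by rw [← hsum]; abel
    have := eq_neg_of_add_eq_zero_left this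
    rw [this]; abel
  have hsq : ‖v3‖ ^ 2 ≤ ‖v0‖ ^ 2 :=
    pow_le_pow_left₀ (norm_nonneg _) hn30 2
  rw [← real_inner_self_eq_norm_sq, ← real_inner_self_eq_norm_sq, h0] at hsq
  simp only [inner_sub_left, inner_sub_right, inner_neg_left, inner_neg_right] at hsq
  set a := ⟪v1, v2⟫_ℝ
  set b := ⟪v1, v3⟫_ℝ
  set c := ⟪v2, v3⟫_ℝ
  have key : -2 * (a + b + c) ≤ ⟪v1, v1⟫_ℝ + ⟪v2, v2⟫_ℝ := by
    linarith [real_inner_comm v2 v1, real_inner_comm v3 v1, real_inner_comm v3 v2]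
  have habs : |e1 * a + e2 * b + e3 * c| ≤ -(a + b + c) := by
    rcases he1 with rfl | rfl <;> rcases he2 with rfl | rfl <;> rcases he3 with rfl | rfl <;>
      rw [abs_le] <;> constructor <;> linarith
  calc 2 * |e1 * a + e2 * b + e3 * c| ≤ 2 * (-(a + b + c)) := by linarith
    _ ≤ ⟪v1, v1⟫_ℝ + ⟪v2, v2⟫_ℝ := by linarith
end

section
/- Let Δ = π/(4b) with b > 0 and write F in terms of Δ: F(a, Δ) = Δ^2 (1 - (1+2a)^2)/π^2. For fixed Δ with π/4 ≤ Δ ≤ π/(2√3), over a ∈ [-1/2, 0] subject to a^2 + b^2 ≥ 1 (where b = π/(4Δ)), the minimum of F is attained at a* = -√(1 - (π/(4Δ))^2), and for fixed a the function Δ ↦ F(a, Δ) is nondecreasing. -/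
open Real

theorem stmt11 (Δ : ℝ) (hΔ1 : π/4 ≤ Δ) (hΔ2 : Δ ≤ π/(2*Real.sqrt 3)) :
    (-(1/2) ≤ -Real.sqrt (1 - (π/(4*Δ))^2) ∧
     -Real.sqrt (1 - (π/(4*Δ))^2) ≤ 0 ∧
     1 ≤ (-Real.sqrt (1 - (π/(4*Δ))^2))^2 + (π/(4*Δ))^2 ∧
     (∀ a : ℝ, -(1/2) ≤ a → a ≤ 0 → 1 ≤ a^2 + (π/(4*Δ))^2 →
        Δ^2 * (1 - (1 + 2*(-Real.sqrt (1 - (π/(4*Δ))^2)))^2) / π^2 ≤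
          Δ^2 * (1 - (1 + 2*a)^2) / π^2)) ∧
    (∀ a : ℝ, -(1/2) ≤ a → a ≤ 0 → ∀ Δ₁ Δ₂ : ℝ, 0 < Δ₁ → Δ₁ ≤ Δ₂ →
      Δ₁^2 * (1 - (1 + 2*a)^2) / π^2 ≤ Δ₂^2 * (1 - (1 + 2*a)^2) / π^2) := by
  have hπ := Real.pi_pos
  have hΔ : 0 < Δ := lt_of_lt_of_le (by positivity) hΔ1
  have h3 : (0:ℝ) < Real.sqrt 3 := Real.sqrt_pos.mpr (by norm_num)
  have h3sq : Real.sqrt 3 ^ 2 = 3 := Real.sq_sqrt (by norm_num)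
  set b := π/(4*Δ) with hbdef
  have hb0 : 0 < b := by positivity
  have hb1 : b ≤ 1 := by
    rw [hbdef, div_le_one (by positivity)]; linarith
  have hΔ2' : Δ * (2*Real.sqrt 3) ≤ π := (le_div_iff₀ (by positivity)).mp hΔ2
  have hblb : Real.sqrt 3 / 2 ≤ b := by
    rw [hbdef, le_div_iff₀ (by positivity)]; nlinarith
  have hnn : (0:ℝ) ≤ 1 - b^2 := by nlinarith
  set s := Real.sqrt (1 - b^2) with hsdef
  have hs0 : 0 ≤ s := Real.sqrt_nonneg _
  have hs2 : s^2 = 1 - b^2 := Real.sq_sqrt hnn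
  have hshalf : s ≤ 1/2 := by nlinarith
  refine ⟨⟨by linarith, by linarith, by nlinarith, ?_⟩, ?_⟩
  · intro a ha1 ha2 ha3
    have haleq : a ≤ -s := by nlinarith
    have h1 : (1 + 2*a)^2 ≤ (1 + 2*(-s))^2 := by nlinarith
    have key : Δ^2 * (1 - (1 + 2*(-s))^2) ≤ Δ^2 * (1 - (1 + 2*a)^2) := by
      nlinarith [mul_nonneg (sq_nonneg Δ) (by linarith : (0:ℝ) ≤ (1 + 2*(-s))^2 - (1 + 2*a)^2)]
    exact div_le_div_of_nonneg_right key (by positivity) |>.trans_eq rfl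
  · intro a ha1 ha2 Δ₁ Δ₂ h1 h2
    have hf : (0:ℝ) ≤ 1 - (1 + 2*a)^2 := by nlinarith
    have : Δ₁^2 * (1 - (1 + 2*a)^2) ≤ Δ₂^2 * (1 - (1 + 2*a)^2) := by
      apply mul_le_mul_of_nonneg_right _ hf
      nlinarith
    exact div_le_div_of_nonneg_right this (by positivity)
end

section
/- Let {v1, v2} with v1 = (1,0), v2 = (a,b), -1/2 ≤ a ≤ 0, b > 0, a^2+b^2 ≥ 1 be a reduced lattice basis. The area of the Babai rectangle [-1/2,1/2] × [-b/2,b/2] not covered by the hexagonal Voronoi region with vertices ±(1/2, (a^2+b^2+a)/(2b)), ±(-1/2, (a^2+b^2+a)/(2b)), ±((2a+1)/2, (-a^2+b^2-a)/(2b)) equals (-a - a^2)/(4b). -/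
set_option maxHeartbeats 1000000
open MeasureTheory Set

lemma horizSeg {x1 x2 x y : ℝ} (h1 : x1 ≤ x) (h2 : x ≤ x2) :
    ((x, y) : ℝ × ℝ) ∈ segment ℝ (x1, y) (x2, y) := by
  have hx : x ∈ segment ℝ x1 x2 := by
    rw [segment_eq_Icc (h1.trans h2)]; exact ⟨h1, h2⟩
  obtain ⟨u, v, hu, hv, huv, hx⟩ := hx
  exact ⟨u, v, hu, hv, huv, by
    simp only [Prod.smul_mk, Prod.mk_add_mk, smul_eq_mul] at *
    exact Prod.ext hx (by dsimp only; rw [← add_mul, huv, one_mul])⟩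

lemma vertSeg {y1 y2 x y : ℝ} (h1 : y1 ≤ y) (h2 : y ≤ y2) :
    ((x, y) : ℝ × ℝ) ∈ segment ℝ (x, y1) (x, y2) := by
  have hy : y ∈ segment ℝ y1 y2 := by
    rw [segment_eq_Icc (h1.trans h2)]; exact ⟨h1, h2⟩
  obtain ⟨u, v, hu, hv, huv, hy⟩ := hy
  exact ⟨u, v, hu, hv, huv, by
    simp only [Prod.smul_mk, Prod.mk_add_mk, smul_eq_mul] at *
    exact Prod.ext (by dsimp only; rw [← add_mul, huv, one_mul]) hy⟩

lemma nullLine (B : ℝ) : volume {p : ℝ × ℝ | p.2 = B} = 0 := by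
  have : {p : ℝ × ℝ | p.2 = B} = (univ : Set ℝ) ×ˢ ({B} : Set ℝ) := by
    ext ⟨x, y⟩; simp [eq_comm]
  rw [this, Measure.volume_eq_prod, Measure.prod_prod]
  simp

lemma lineIntegral (l u A β : ℝ) (hlu : l ≤ u) :
    ∫ x in Icc l u, (A + β * x) = A * (u - l) + β * (u ^ 2 - l ^ 2) / 2 := by
  rw [integral_Icc_eq_integral_Ioc, ← intervalIntegral.integral_of_le hlu]
  have h1 : IntervalIntegrable (fun _ : ℝ => A) volume l u := intervalIntegrable_const
  have h2 : IntervalIntegrable (fun x : ℝ => β * x) volume l u :=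
    (continuous_const.mul continuous_id).intervalIntegrable l u
  rw [intervalIntegral.integral_add h1 h2, intervalIntegral.integral_const,
    intervalIntegral.integral_const_mul, integral_id]
  simp [smul_eq_mul]; ring

lemma volGraphGen (f : ℝ → ℝ) (hfc : Continuous f) (l u B A β : ℝ)
    (hf : f = fun x => A + β * x) (hlu : l ≤ u) (hB : ∀ x ∈ Icc l u, f x ≤ B)
    (S : Set (ℝ × ℝ))
    (hsub : regionBetween f (fun _ => B) (Icc l u) ⊆ S)
    (hsub2 : S \ regionBetween f (fun _ => B) (Icc l u) ⊆ {p : ℝ × ℝ | p.2 = B}) :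
    volume S = ENNReal.ofReal ((B - A) * (u - l) - β * (u ^ 2 - l ^ 2) / 2) := by
  have hreg : volume (regionBetween f (fun _ => B) (Icc l u)) =
      ENNReal.ofReal ((B - A) * (u - l) - β * (u ^ 2 - l ^ 2) / 2) := by
    rw [Measure.volume_eq_prod]
    rw [volume_regionBetween_eq_integral
      hfc.integrableOn_Icc (continuous_const.integrableOn_Icc) measurableSet_Icc hB]
    congr 1
    rw [show ((fun _ => B) - f) = fun x => (B - A) + (-β) * x from by
      funext x; simp [hf]; ring]
    rw [lineIntegral l u (B - A) (-β) hlu]; ring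
  refine le_antisymm ?_ (hreg ▸ measure_mono hsub)
  have hcover : S ⊆ regionBetween f (fun _ => B) (Icc l u) ∪ {p : ℝ × ℝ | p.2 = B} := by
    intro p hp
    by_cases h : p ∈ regionBetween f (fun _ => B) (Icc l u)
    · exact Or.inl h
    · exact Or.inr (hsub2 ⟨hp, h⟩)
  refine le_trans (measure_mono hcover) (le_trans (measure_union_le _ _) ?_)
  rw [nullLine, add_zero, hreg]

lemma volIocGraph (l u B A β : ℝ) (hlu : l ≤ u) (hB : ∀ x ∈ Icc l u, A + β * x ≤ B) :
    volume {p : ℝ × ℝ | p.1 ∈ Icc l u ∧ p.2 ∈ Ioc (A + β * p.1) B} =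
      ENNReal.ofReal ((B - A) * (u - l) - β * (u ^ 2 - l ^ 2) / 2) := by
  refine volGraphGen (fun x => A + β * x) (by continuity) l u B A β rfl hlu hB _ ?_ ?_
  · rintro ⟨x, y⟩ ⟨hx, hy⟩
    exact ⟨hx, Ioo_subset_Ioc_self hy⟩
  · rintro ⟨x, y⟩ ⟨⟨hx, hy1, hy2⟩, hn⟩
    simp only [regionBetween, mem_setOf_eq, mem_Ioo, not_and, not_lt] at hn
    exact le_antisymm hy2 (hn hx hy1)

lemma volIcoGraphGen (f : ℝ → ℝ) (hfc : Continuous f) (l u B A β : ℝ)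
    (hf : f = fun x => A + β * x) (hlu : l ≤ u) (hB : ∀ x ∈ Icc l u, B ≤ f x)
    (S : Set (ℝ × ℝ))
    (hsub : regionBetween (fun _ => B) f (Icc l u) ⊆ S)
    (hsub2 : S \ regionBetween (fun _ => B) f (Icc l u) ⊆ {p : ℝ × ℝ | p.2 = B}) :
    volume S = ENNReal.ofReal ((A - B) * (u - l) + β * (u ^ 2 - l ^ 2) / 2) := by
  have hreg : volume (regionBetween (fun _ => B) f (Icc l u)) =
      ENNReal.ofReal ((A - B) * (u - l) + β * (u ^ 2 - l ^ 2) / 2) := by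
    rw [Measure.volume_eq_prod]
    rw [volume_regionBetween_eq_integral
      (continuous_const.integrableOn_Icc) hfc.integrableOn_Icc measurableSet_Icc hB]
    congr 1
    rw [show (f - (fun _ => B)) = fun x => (A - B) + β * x from by
      funext x; simp [hf]; ring]
    rw [lineIntegral l u (A - B) β hlu]
  refine le_antisymm ?_ (hreg ▸ measure_mono hsub)
  have hcover : S ⊆ regionBetween (fun _ => B) f (Icc l u) ∪ {p : ℝ × ℝ | p.2 = B} := by
    intro p hp
    by_cases h : p ∈ regionBetween (fun _ => B) f (Icc l u)
    · exact Or.inl h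
    · exact Or.inr (hsub2 ⟨hp, h⟩)
  refine le_trans (measure_mono hcover) (le_trans (measure_union_le _ _) ?_)
  rw [nullLine, add_zero, hreg]

lemma volIcoGraph (l u B A β : ℝ) (hlu : l ≤ u) (hB : ∀ x ∈ Icc l u, B ≤ A + β * x) :
    volume {p : ℝ × ℝ | p.1 ∈ Icc l u ∧ p.2 ∈ Ico B (A + β * p.1)} =
      ENNReal.ofReal ((A - B) * (u - l) + β * (u ^ 2 - l ^ 2) / 2) := by
  refine volIcoGraphGen (fun x => A + β * x) (by continuity) l u B A β rfl hlu hB _ ?_ ?_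
  · rintro ⟨x, y⟩ ⟨hx, hy⟩
    exact ⟨hx, Ioo_subset_Ico_self hy⟩
  · rintro ⟨x, y⟩ ⟨⟨hx, hy1, hy2⟩, hn⟩
    simp only [regionBetween, mem_setOf_eq, mem_Ioo, not_and, not_lt] at hn
    have : ¬ (B < y) := fun h => absurd hy2 (not_lt.mpr (hn hx h))
    exact le_antisymm (not_lt.mp this) hy1

lemma measIoc (l u B A β : ℝ) :
    MeasurableSet {p : ℝ × ℝ | p.1 ∈ Icc l u ∧ p.2 ∈ Ioc (A + β * p.1) B} := by
  have : {p : ℝ × ℝ | p.1 ∈ Icc l u ∧ p.2 ∈ Ioc (A + β * p.1) B} =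
      (Prod.fst ⁻¹' Icc l u) ∩ {p : ℝ × ℝ | A + β * p.1 < p.2} ∩ {p : ℝ × ℝ | p.2 ≤ B} := by
    ext p; simp only [mem_inter_iff, mem_preimage, mem_setOf_eq, mem_Ioc]; tauto
  rw [this]
  exact ((measurable_fst measurableSet_Icc).inter
    (measurableSet_lt ((measurable_fst.const_mul β).const_add A) measurable_snd)).inter
    (measurableSet_le measurable_snd measurable_const)

lemma measIco (l u B A β : ℝ) :
    MeasurableSet {p : ℝ × ℝ | p.1 ∈ Icc l u ∧ p.2 ∈ Ico B (A + β * p.1)} := by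
  have : {p : ℝ × ℝ | p.1 ∈ Icc l u ∧ p.2 ∈ Ico B (A + β * p.1)} =
      (Prod.fst ⁻¹' Icc l u) ∩ {p : ℝ × ℝ | B ≤ p.2} ∩ {p : ℝ × ℝ | p.2 < A + β * p.1} := by
    ext p; simp only [mem_inter_iff, mem_preimage, mem_setOf_eq, mem_Ico]; tauto
  rw [this]
  exact ((measurable_fst measurableSet_Icc).inter
    (measurableSet_le measurable_const measurable_snd)).inter
    (measurableSet_lt measurable_snd ((measurable_fst.const_mul β).const_add A))
lemma hullEq (a b : ℝ) (ha1 : -(1/2) ≤ a) (ha2 : a ≤ 0) (hb : 0 < b)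
    (hab : 1 ≤ a^2 + b^2) :
    convexHull ℝ
      ({((1:ℝ)/2, (a^2 + b^2 + a)/(2*b)),
        (-(1:ℝ)/2, (a^2 + b^2 + a)/(2*b)),
        ((2*a + 1)/2, (-a^2 + b^2 - a)/(2*b)),
        (-(1:ℝ)/2, -((a^2 + b^2 + a)/(2*b))),
        ((1:ℝ)/2, -((a^2 + b^2 + a)/(2*b))),
        (-((2*a + 1)/2), -((-a^2 + b^2 - a)/(2*b)))} : Set (ℝ × ℝ)) =
    {p : ℝ × ℝ | (-(1/2) ≤ p.1 ∧ p.1 ≤ 1/2) ∧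
      (-((a^2+b^2)/2) ≤ a*p.1 + b*p.2 ∧ a*p.1 + b*p.2 ≤ (a^2+b^2)/2) ∧
      (-(((a+1)^2+b^2)/2) ≤ (a+1)*p.1 + b*p.2 ∧ (a+1)*p.1 + b*p.2 ≤ ((a+1)^2+b^2)/2)} := by
  have hb' : b ≠ 0 := ne_of_gt hb
  set c : ℝ := (a^2 + b^2 + a)/(2*b) with hc
  set d : ℝ := (-a^2 + b^2 - a)/(2*b) with hd
  set S : Set (ℝ × ℝ) :=
      {((1:ℝ)/2, c), (-(1:ℝ)/2, c), ((2*a + 1)/2, d),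
       (-(1:ℝ)/2, -c), ((1:ℝ)/2, -c), (-((2*a + 1)/2), -d)} with hS
  set K : Set (ℝ × ℝ) := {p : ℝ × ℝ | (-(1/2) ≤ p.1 ∧ p.1 ≤ 1/2) ∧
      (-((a^2+b^2)/2) ≤ a*p.1 + b*p.2 ∧ a*p.1 + b*p.2 ≤ (a^2+b^2)/2) ∧
      (-(((a+1)^2+b^2)/2) ≤ (a+1)*p.1 + b*p.2 ∧ (a+1)*p.1 + b*p.2 ≤ ((a+1)^2+b^2)/2)} with hK
  have hbc : b * c = (a^2 + b^2 + a)/2 := by rw [hc]; field_simp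
  have hbd : b * d = (-a^2 + b^2 - a)/2 := by rw [hd]; field_simp
  have hcpos : 0 < c := by rw [hc]; apply div_pos (by nlinarith) (by linarith)
  apply le_antisymm
  · -- hull ⊆ K
    apply convexHull_min
    · rintro p hp
      simp only [hS, mem_insert_iff, mem_singleton_iff] at hp
      rcases hp with rfl|rfl|rfl|rfl|rfl|rfl <;>
        refine ⟨⟨by linarith, by linarith⟩, ⟨?_, ?_⟩, ⟨?_, ?_⟩⟩ <;>
        simp only [mul_neg]
      all_goals nlinarith [hbc, hbd]
    · -- K convex
      have l1 : IsLinearMap ℝ (fun p : ℝ × ℝ => p.1) := ⟨fun _ _ => rfl, fun _ _ => rfl⟩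
      have l2 : IsLinearMap ℝ (fun p : ℝ × ℝ => a * p.1 + b * p.2) :=
        ⟨by intro p q; simp [Prod.fst_add, Prod.snd_add]; ring,
         by intro r p; simp [Prod.smul_fst, Prod.smul_snd, smul_eq_mul]; ring⟩
      have l3 : IsLinearMap ℝ (fun p : ℝ × ℝ => (a+1) * p.1 + b * p.2) :=
        ⟨by intro p q; simp [Prod.fst_add, Prod.snd_add]; ring,
         by intro r p; simp [Prod.smul_fst, Prod.smul_snd, smul_eq_mul]; ring⟩
      have : K = ({p : ℝ × ℝ | -(1/2) ≤ p.1} ∩ {p : ℝ × ℝ | p.1 ≤ 1/2}) ∩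
          (({p : ℝ × ℝ | -((a^2+b^2)/2) ≤ a*p.1 + b*p.2} ∩
            {p : ℝ × ℝ | a*p.1 + b*p.2 ≤ (a^2+b^2)/2}) ∩
           ({p : ℝ × ℝ | -(((a+1)^2+b^2)/2) ≤ (a+1)*p.1 + b*p.2} ∩
            {p : ℝ × ℝ | (a+1)*p.1 + b*p.2 ≤ ((a+1)^2+b^2)/2})) := by
        ext p; simp only [hK, mem_setOf_eq, mem_inter_iff]; try tauto
      rw [this]
      exact (((convex_halfSpace_ge l1 _).inter (convex_halfSpace_le l1 _)).inter
        (((convex_halfSpace_ge l2 _).inter (convex_halfSpace_le l2 _)).inter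
         ((convex_halfSpace_ge l3 _).inter (convex_halfSpace_le l3 _))))
  · -- K ⊆ hull
    have hHconv : Convex ℝ (convexHull ℝ S) := convex_convexHull ℝ S
    have hv1 : ((1:ℝ)/2, c) ∈ convexHull ℝ S := subset_convexHull ℝ S (by simp [hS])
    have hv2 : (-(1:ℝ)/2, c) ∈ convexHull ℝ S := subset_convexHull ℝ S (by simp [hS])
    have hv3 : ((2*a + 1)/2, d) ∈ convexHull ℝ S := subset_convexHull ℝ S (by simp [hS])
    have hv4 : (-(1:ℝ)/2, -c) ∈ convexHull ℝ S := subset_convexHull ℝ S (by simp [hS])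
    have hv5 : ((1:ℝ)/2, -c) ∈ convexHull ℝ S := subset_convexHull ℝ S (by simp [hS])
    have key : ∀ x y : ℝ, -(1/2) ≤ x → x ≤ 1/2 → a*x + b*y ≤ (a^2+b^2)/2 →
        (a+1)*x + b*y ≤ ((a+1)^2+b^2)/2 → 0 ≤ y → ((x, y) : ℝ × ℝ) ∈ convexHull ℝ S := by
      intro x y hx1 hx2 h2u h3u hy
      have hyd : b*y ≤ (b^2 - a - a^2)/2 := by
        nlinarith [mul_le_mul_of_nonneg_left h2u (show (0:ℝ) ≤ a+1 by linarith),
          mul_le_mul_of_nonneg_left h3u (show (0:ℝ) ≤ -a by linarith)]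
      by_cases hcy : y ≤ c
      · have hA : ((-(1:ℝ)/2, y) : ℝ × ℝ) ∈ convexHull ℝ S :=
          hHconv.segment_subset hv4 hv2 (vertSeg (by linarith) hcy)
        have hB : (((1:ℝ)/2, y) : ℝ × ℝ) ∈ convexHull ℝ S :=
          hHconv.segment_subset hv5 hv1 (vertSeg (by linarith) hcy)
        exact hHconv.segment_subset hA hB (horizSeg (by linarith) (by linarith))
      · push_neg at hcy
        have ha0 : a < 0 := by
          rcases ha2.lt_or_eq with h | h
          · exact h
          · exfalso
            rw [hc] at hcy
            subst h
            rw [div_lt_iff₀ (by linarith)] at hcy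
            simp at hcy
            nlinarith
        have hDn : (0:ℝ) < -2*a*(a+1) := by nlinarith
        set t : ℝ := (2*b*y - (a^2 + b^2 + a)) / (-2*a*(a+1)) with htdef
        have hty : t * (-2*a*(a+1)) = 2*b*y - (a^2 + b^2 + a) :=
          div_mul_cancel₀ _ (ne_of_gt hDn)
        have hN : 0 ≤ 2*b*y - (a^2 + b^2 + a) := by
          rw [hc, div_lt_iff₀ (by linarith : (0:ℝ) < 2*b)] at hcy
          linarith
        have ht0 : 0 ≤ t := div_nonneg hN hDn.le
        have ht1 : t ≤ 1 := by
          rw [htdef, div_le_one hDn]; linarith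
        have hPy : (1-t)*c + t*d = y := by
          rw [hc, hd]
          have expand : (1-t)*((a^2 + b^2 + a)/(2*b)) + t*((-a^2 + b^2 - a)/(2*b))
              = ((1-t)*(a^2 + b^2 + a) + t*(-a^2 + b^2 - a))/(2*b) := by ring
          rw [expand, div_eq_iff (by linarith : (2:ℝ)*b ≠ 0)]
          linear_combination hty
        have hPmem : ((-(1:ℝ)/2 + t*(a+1), y) : ℝ × ℝ) ∈ convexHull ℝ S := by
          refine hHconv.segment_subset hv2 hv3 ⟨1 - t, t, by linarith, ht0, by ring, ?_⟩
          simp only [Prod.smul_mk, Prod.mk_add_mk, smul_eq_mul]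
          exact Prod.ext (by ring) hPy
        have hQmem : (((1:ℝ)/2 + t*a, y) : ℝ × ℝ) ∈ convexHull ℝ S := by
          refine hHconv.segment_subset hv1 hv3 ⟨1 - t, t, by linarith, ht0, by ring, ?_⟩
          simp only [Prod.smul_mk, Prod.mk_add_mk, smul_eq_mul]
          exact Prod.ext (by ring) hPy
        have hPid : a*(-(1:ℝ)/2 + t*(a+1)) + b*y = (a^2+b^2)/2 := by
          linear_combination (-1/2 : ℝ) * hty
        have hQid : (a+1)*((1:ℝ)/2 + t*a) + b*y = ((a+1)^2+b^2)/2 := by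
          linear_combination (-1/2 : ℝ) * hty
        have hxP : -(1:ℝ)/2 + t*(a+1) ≤ x := by
          have h1 : (-a) * (-(1:ℝ)/2 + t*(a+1)) ≤ (-a) * x := by nlinarith [hPid, h2u]
          exact le_of_mul_le_mul_left h1 (by linarith)
        have hxQ : x ≤ (1:ℝ)/2 + t*a := by
          have h1 : (a+1) * x ≤ (a+1) * ((1:ℝ)/2 + t*a) := by nlinarith [hQid, h3u]
          exact le_of_mul_le_mul_left h1 (by linarith)
        exact hHconv.segment_subset hPmem hQmem (horizSeg hxP hxQ)
    rintro ⟨x, y⟩ ⟨⟨hx1, hx2⟩, ⟨h2l, h2u⟩, ⟨h3l, h3u⟩⟩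
    rcases le_or_gt 0 y with hy | hy
    · exact key x y hx1 hx2 h2u h3u hy
    · have hneg : ((-x, -y) : ℝ × ℝ) ∈ convexHull ℝ S := by
        refine key (-x) (-y) (by linarith) (by linarith) (by linarith) (by linarith)
          (by linarith)
      have hSneg : -S ⊆ S := by
        intro q hq
        simp only [Set.mem_neg, hS, mem_insert_iff, mem_singleton_iff, Prod.ext_iff] at hq ⊢
        obtain ⟨qx, qy⟩ := q
        simp only [Prod.fst_neg, Prod.snd_neg] at hq
        rcases hq with ⟨h1, h2⟩|⟨h1, h2⟩|⟨h1, h2⟩|⟨h1, h2⟩|⟨h1, h2⟩|⟨h1, h2⟩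
        · right; right; right; left; constructor <;> [linarith; linarith]
        · right; right; right; right; left; constructor <;> [linarith; linarith]
        · right; right; right; right; right; constructor <;> [linarith; linarith]
        · left; constructor <;> [linarith; linarith]
        · right; left; constructor <;> [linarith; linarith]
        · right; right; left; constructor <;> [linarith; linarith]
      have : ((x, y) : ℝ × ℝ) ∈ -convexHull ℝ S := by
        rw [Set.mem_neg]
        convert hneg using 1
        try simp [Prod.ext_iff]
      rw [← convexHull_neg] at this
      exact convexHull_mono hSneg this

theorem stmt15 (a b : ℝ) (ha1 : -(1/2) ≤ a) (ha2 : a ≤ 0) (hb : 0 < b)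
    (hab : 1 ≤ a^2 + b^2) :
    MeasureTheory.volume
        ((Set.Icc (-(1/2) : ℝ) (1/2) ×ˢ Set.Icc (-b/2) (b/2)) \
          convexHull ℝ
            ({((1:ℝ)/2, (a^2 + b^2 + a)/(2*b)),
              (-(1:ℝ)/2, (a^2 + b^2 + a)/(2*b)),
              ((2*a + 1)/2, (-a^2 + b^2 - a)/(2*b)),
              (-(1:ℝ)/2, -((a^2 + b^2 + a)/(2*b))),
              ((1:ℝ)/2, -((a^2 + b^2 + a)/(2*b))),
              (-((2*a + 1)/2), -((-a^2 + b^2 - a)/(2*b)))} : Set (ℝ × ℝ))) =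
      ENNReal.ofReal ((-a - a^2)/(4*b)) := by
  have hb' : b ≠ 0 := ne_of_gt hb
  rw [hullEq a b ha1 ha2 hb hab]
  set T1 : Set (ℝ × ℝ) := {p : ℝ × ℝ | p.1 ∈ Icc (-(1/2) : ℝ) (a/2) ∧
      p.2 ∈ Ioc ((a^2+b^2)/(2*b) + (-a/b) * p.1) (b/2)} with hT1
  set T2 : Set (ℝ × ℝ) := {p : ℝ × ℝ | p.1 ∈ Icc ((a+1)/2) ((1:ℝ)/2) ∧
      p.2 ∈ Ioc (((a+1)^2+b^2)/(2*b) + (-(a+1)/b) * p.1) (b/2)} with hT2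
  set T3 : Set (ℝ × ℝ) := {p : ℝ × ℝ | p.1 ∈ Icc (-a/2) ((1:ℝ)/2) ∧
      p.2 ∈ Ico (-b/2) (-((a^2+b^2)/(2*b)) + (-a/b) * p.1)} with hT3
  set T4 : Set (ℝ × ℝ) := {p : ℝ × ℝ | p.1 ∈ Icc (-(1/2) : ℝ) (-(a+1)/2) ∧
      p.2 ∈ Ico (-b/2) (-(((a+1)^2+b^2)/(2*b)) + (-(a+1)/b) * p.1)} with hT4
  -- form rewrites
  have hf1 : ∀ x : ℝ, (a^2+b^2)/(2*b) + (-a/b) * x = ((a^2+b^2)/2 - a*x)/b := by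
    intro x; field_simp; ring
  have hf2 : ∀ x : ℝ, ((a+1)^2+b^2)/(2*b) + (-(a+1)/b) * x = (((a+1)^2+b^2)/2 - (a+1)*x)/b := by
    intro x; field_simp; ring
  have hf3 : ∀ x : ℝ, -((a^2+b^2)/(2*b)) + (-a/b) * x = (-((a^2+b^2)/2) - a*x)/b := by
    intro x; field_simp; ring
  have hf4 : ∀ x : ℝ, -(((a+1)^2+b^2)/(2*b)) + (-(a+1)/b) * x = (-(((a+1)^2+b^2)/2) - (a+1)*x)/b := by
    intro x; field_simp; ring
  have hdecomp :
      ((Icc (-(1/2) : ℝ) (1/2) ×ˢ Icc (-b/2) (b/2)) \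
        {p : ℝ × ℝ | (-(1/2) ≤ p.1 ∧ p.1 ≤ 1/2) ∧
          (-((a^2+b^2)/2) ≤ a*p.1 + b*p.2 ∧ a*p.1 + b*p.2 ≤ (a^2+b^2)/2) ∧
          (-(((a+1)^2+b^2)/2) ≤ (a+1)*p.1 + b*p.2 ∧ (a+1)*p.1 + b*p.2 ≤ ((a+1)^2+b^2)/2)})
      = T1 ∪ T2 ∪ T3 ∪ T4 := by
    ext ⟨x, y⟩
    simp only [mem_diff, mem_prod, mem_Icc, mem_setOf_eq, mem_union, hT1, hT2, hT3, hT4,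
      mem_Ioc, mem_Ico]
    constructor
    · rintro ⟨⟨⟨hx1, hx2⟩, hy1, hy2⟩, hnK⟩
      have h4 : (a^2+b^2)/2 < a*x + b*y ∨ a*x + b*y < -((a^2+b^2)/2) ∨
          ((a+1)^2+b^2)/2 < (a+1)*x + b*y ∨ (a+1)*x + b*y < -(((a+1)^2+b^2)/2) := by
        by_contra hcon
        push_neg at hcon
        exact hnK ⟨⟨hx1, hx2⟩, ⟨hcon.2.1, hcon.1⟩, ⟨hcon.2.2.2, hcon.2.2.1⟩⟩
      rcases h4 with h | h | h | h
      · left; left; left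
        have hax : a^2/2 < a * x := by nlinarith
        have hxa : x ≤ a/2 := by
          by_contra hcc
          push_neg at hcc
          have := mul_le_mul_of_nonpos_left hcc.le ha2
          linarith
        refine ⟨⟨hx1, hxa⟩, ?_, hy2⟩
        rw [hf1, div_lt_iff₀ hb]; linarith
      · left; right
        have hax : a * x < -(a^2/2) := by nlinarith
        have hxa : -a/2 ≤ x := by
          by_contra hcc
          push_neg at hcc
          have := mul_le_mul_of_nonpos_left hcc.le ha2
          linarith
        refine ⟨⟨hxa, hx2⟩, hy1, ?_⟩
        rw [hf3, lt_div_iff₀ hb]; linarith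
      · left; left; right
        have hax : (a+1) * ((a+1)/2) < (a+1) * x := by nlinarith
        have hxa : (a+1)/2 ≤ x := (lt_of_mul_lt_mul_left hax (by linarith)).le
        refine ⟨⟨hxa, hx2⟩, ?_, hy2⟩
        rw [hf2, div_lt_iff₀ hb]; linarith
      · right
        have hax : (a+1) * x < (a+1) * (-(a+1)/2) := by nlinarith
        have hxa : x ≤ -(a+1)/2 := (lt_of_mul_lt_mul_left hax (by linarith)).le
        refine ⟨⟨hx1, hxa⟩, hy1, ?_⟩
        rw [hf4, lt_div_iff₀ hb]; linarith
    · rintro (((⟨⟨hx1, hx2⟩, hy1, hy2⟩ | ⟨⟨hx1, hx2⟩, hy1, hy2⟩) |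
          ⟨⟨hx1, hx2⟩, hy1, hy2⟩) | ⟨⟨hx1, hx2⟩, hy1, hy2⟩)
      · rw [hf1, div_lt_iff₀ hb] at hy1
        have hax : a * x ≤ a * (-(1/2)) := mul_le_mul_of_nonpos_left hx1 ha2
        have hypos : 0 < y := by nlinarith
        refine ⟨⟨⟨hx1, by linarith⟩, by linarith, hy2⟩, ?_⟩
        rintro ⟨-, ⟨-, hcon⟩, -⟩
        linarith
      · rw [hf2, div_lt_iff₀ hb] at hy1
        have hax : (a+1) * x ≤ (a+1) * (1/2) :=
          mul_le_mul_of_nonneg_left hx2 (by linarith)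
        have hypos : 0 < y := by nlinarith
        refine ⟨⟨⟨by linarith, hx2⟩, by linarith, hy2⟩, ?_⟩
        rintro ⟨-, -, ⟨-, hcon⟩⟩
        linarith
      · rw [hf3, lt_div_iff₀ hb] at hy2
        have hax : a * (1/2) ≤ a * x := mul_le_mul_of_nonpos_left hx2 ha2
        have hyneg : y < 0 := by nlinarith
        refine ⟨⟨⟨by linarith, hx2⟩, hy1, by linarith⟩, ?_⟩
        rintro ⟨-, ⟨hcon, -⟩, -⟩
        linarith
      · rw [hf4, lt_div_iff₀ hb] at hy2
        have hax : (a+1) * (-(1/2)) ≤ (a+1) * x :=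
          mul_le_mul_of_nonneg_left hx1 (by linarith)
        have hyneg : y < 0 := by nlinarith
        refine ⟨⟨⟨hx1, by linarith⟩, hy1, by linarith⟩, ?_⟩
        rintro ⟨-, -, ⟨hcon, -⟩⟩
        linarith
  rw [hdecomp]
  -- sign facts
  have hT1pos : ∀ p ∈ T1, 0 < p.2 := by
    rintro ⟨x, y⟩ ⟨⟨hx1, hx2⟩, hy1, hy2⟩
    rw [hf1, div_lt_iff₀ hb] at hy1
    have hax : a * x ≤ a * (-(1/2)) := mul_le_mul_of_nonpos_left hx1 ha2
    nlinarith
  have hT2pos : ∀ p ∈ T2, 0 < p.2 := by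
    rintro ⟨x, y⟩ ⟨⟨hx1, hx2⟩, hy1, hy2⟩
    rw [hf2, div_lt_iff₀ hb] at hy1
    have hax : (a+1) * x ≤ (a+1) * (1/2) := mul_le_mul_of_nonneg_left hx2 (by linarith)
    nlinarith
  have hT3neg : ∀ p ∈ T3, p.2 < 0 := by
    rintro ⟨x, y⟩ ⟨⟨hx1, hx2⟩, hy1, hy2⟩
    rw [hf3, lt_div_iff₀ hb] at hy2
    have hax : a * (1/2) ≤ a * x := mul_le_mul_of_nonpos_left hx2 ha2
    nlinarith
  have hT4neg : ∀ p ∈ T4, p.2 < 0 := by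
    rintro ⟨x, y⟩ ⟨⟨hx1, hx2⟩, hy1, hy2⟩
    rw [hf4, lt_div_iff₀ hb] at hy2
    have hax : (a+1) * (-(1/2)) ≤ (a+1) * x := mul_le_mul_of_nonneg_left hx1 (by linarith)
    nlinarith
  -- disjointness
  have hd12 : Disjoint T1 T2 := by
    rw [Set.disjoint_left]
    rintro ⟨x, y⟩ ⟨⟨-, hx2⟩, -⟩ ⟨⟨hx1', -⟩, -⟩
    simp only at hx2 hx1'
    linarith
  have hd13 : Disjoint T1 T3 := by
    rw [Set.disjoint_left]
    intro p h1 h3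
    exact absurd (hT1pos p h1) (not_lt.mpr (hT3neg p h3).le)
  have hd14 : Disjoint T1 T4 := by
    rw [Set.disjoint_left]
    intro p h1 h4
    exact absurd (hT1pos p h1) (not_lt.mpr (hT4neg p h4).le)
  have hd23 : Disjoint T2 T3 := by
    rw [Set.disjoint_left]
    intro p h2 h3
    exact absurd (hT2pos p h2) (not_lt.mpr (hT3neg p h3).le)
  have hd24 : Disjoint T2 T4 := by
    rw [Set.disjoint_left]
    intro p h2 h4
    exact absurd (hT2pos p h2) (not_lt.mpr (hT4neg p h4).le)
  have hd34 : Disjoint T3 T4 := by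
    rw [Set.disjoint_left]
    rintro ⟨x, y⟩ ⟨⟨hx1, -⟩, -⟩ ⟨⟨-, hx2'⟩, -⟩
    simp only at hx1 hx2'
    linarith
  -- measurability
  have hm2 : MeasurableSet T2 := measIoc _ _ _ _ _
  have hm3 : MeasurableSet T3 := measIco _ _ _ _ _
  have hm4 : MeasurableSet T4 := measIco _ _ _ _ _
  rw [measure_union (by
      rw [disjoint_union_left, disjoint_union_left]
      exact ⟨⟨hd14, hd24⟩, hd34⟩) hm4,
    measure_union (by
      rw [disjoint_union_left]
      exact ⟨hd13, hd23⟩) hm3,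
    measure_union hd12 hm2]
  -- volumes
  have hV1 : volume T1 = ENNReal.ofReal ((b/2 - (a^2+b^2)/(2*b)) * (a/2 - (-(1/2))) -
      (-a/b) * ((a/2)^2 - (-(1/2))^2) / 2) := by
    rw [hT1]
    refine volIocGraph _ _ _ _ _ (by linarith) ?_
    intro x hx
    rw [hf1, div_le_iff₀ hb]
    have := mul_le_mul_of_nonpos_left hx.2 ha2
    nlinarith
  have hV2 : volume T2 = ENNReal.ofReal ((b/2 - ((a+1)^2+b^2)/(2*b)) * (1/2 - (a+1)/2) -
      (-(a+1)/b) * ((1/2)^2 - ((a+1)/2)^2) / 2) := by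
    rw [hT2]
    refine volIocGraph _ _ _ _ _ (by linarith) ?_
    intro x hx
    rw [hf2, div_le_iff₀ hb]
    have := mul_le_mul_of_nonneg_left hx.1 (show (0:ℝ) ≤ a+1 by linarith)
    nlinarith
  have hV3 : volume T3 = ENNReal.ofReal ((-((a^2+b^2)/(2*b)) - (-b/2)) * (1/2 - (-a/2)) +
      (-a/b) * ((1/2)^2 - (-a/2)^2) / 2) := by
    rw [hT3]
    refine volIcoGraph _ _ _ _ _ (by linarith) ?_
    intro x hx
    rw [hf3, le_div_iff₀ hb]
    have := mul_le_mul_of_nonpos_left hx.1 ha2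
    nlinarith
  have hV4 : volume T4 = ENNReal.ofReal ((-(((a+1)^2+b^2)/(2*b)) - (-b/2)) * (-(a+1)/2 - (-(1/2))) +
      (-(a+1)/b) * ((-(a+1)/2)^2 - (-(1/2))^2) / 2) := by
    rw [hT4]
    refine volIcoGraph _ _ _ _ _ (by linarith) ?_
    intro x hx
    rw [hf4, le_div_iff₀ hb]
    have := mul_le_mul_of_nonneg_left hx.2 (show (0:ℝ) ≤ a+1 by linarith)
    nlinarith
  rw [hV1, hV2, hV3, hV4]
  -- closed forms
  have he1 : (b/2 - (a^2+b^2)/(2*b)) * (a/2 - (-(1/2))) -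
      (-a/b) * ((a/2)^2 - (-(1/2))^2) / 2 = (-a) * (a+1)^2 / (8*b) := by
    field_simp; ring
  have he2 : (b/2 - ((a+1)^2+b^2)/(2*b)) * (1/2 - (a+1)/2) -
      (-(a+1)/b) * ((1/2)^2 - ((a+1)/2)^2) / 2 = a^2 * (a+1) / (8*b) := by
    field_simp; ring
  have he3 : (-((a^2+b^2)/(2*b)) - (-b/2)) * (1/2 - (-a/2)) +
      (-a/b) * ((1/2)^2 - (-a/2)^2) / 2 = (-a) * (a+1)^2 / (8*b) := by
    field_simp; ring
  have he4 : (-(((a+1)^2+b^2)/(2*b)) - (-b/2)) * (-(a+1)/2 - (-(1/2))) +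
      (-(a+1)/b) * ((-(a+1)/2)^2 - (-(1/2))^2) / 2 = a^2 * (a+1) / (8*b) := by
    field_simp; ring
  rw [he1, he2, he3, he4]
  have hn1 : (0:ℝ) ≤ (-a) * (a+1)^2 / (8*b) :=
    div_nonneg (mul_nonneg (by linarith) (sq_nonneg _)) (by linarith)
  have hn2 : (0:ℝ) ≤ a^2 * (a+1) / (8*b) :=
    div_nonneg (mul_nonneg (sq_nonneg _) (by linarith)) (by linarith)
  rw [← ENNReal.ofReal_add hn1 hn2, ← ENNReal.ofReal_add (by linarith) hn1,
    ← ENNReal.ofReal_add (by linarith) hn2]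
  congr 1
  field_simp
  ring
end

section
/- Let q ≥ 1 be a positive integer and x a real number. There exists a largest s ∈ {0, 1, ..., q-1} such that round(x - s/q) = round(x), where round denotes rounding to the nearest integer; moreover for every integer t, round(x - t/q) equals either round(x) - ⌊t/q⌋ or round(x) - ⌊t/q⌋ - 1, the first case occurring exactly when (t mod q) ≤ s. -/
/-!
Write `round x = ⌊x + 1/2⌋` and let `f = fract (x + 1/2)`. Subtracting a number `a ∈ [0, 1)`
from `x` keeps the rounding iff `a ≤ f`, and otherwise lowers it by one. Splitting `t / q` into
its integer part `⌊t / q⌋` and its fractional part `(t % q) / q`, the latter is `≤ f` exactly when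
`t % q ≤ ⌊q f⌋`, so `s = ⌊q f⌋` is the threshold.
-/

open Int

variable {α : Type*} [Field α] [LinearOrder α] [IsStrictOrderedRing α] [FloorRing α]

theorem Int.fract_intCast_div_intCast {t q : ℤ} (hq : 0 < q) :
    fract ((t : α) / q) = ((t % q : ℤ) : α) / q := by
  lift q to ℕ using hq.le
  simpa using fract_div_intCast_eq_div_intCast_mod (k := α) (m := t) (n := q)

theorem round_sub_of_nonneg_of_lt_one (x : α) {a : α} (ha₀ : 0 ≤ a) (ha₁ : a < 1) :
    round (x - a) = round x - if a ≤ fract (x + 1 / 2) then 0 else 1 := by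
  have hsplit : x - a + 1 / 2 = (⌊x + 1 / 2⌋ : α) + (fract (x + 1 / 2) - a) := by
    rw [Int.fract]; ring
  have hf₀ := fract_nonneg (x + 1 / 2)
  have hf₁ := fract_lt_one (x + 1 / 2)
  rw [round_eq, round_eq, hsplit, floor_intCast_add]
  split_ifs with h
  · rw [show ⌊fract (x + 1 / 2) - a⌋ = 0 from
      floor_eq_zero_iff.mpr ⟨by linarith, by linarith⟩]
    ring
  · rw [show ⌊fract (x + 1 / 2) - a⌋ = -1 from
      floor_eq_iff.mpr ⟨by push_cast; linarith, by push_cast; linarith [not_le.mp h]⟩]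
    ring

/-- The threshold `s` of the transmission protocol: the largest `s < q` with
`round (x - s / q) = round x`. -/
def roundThreshold (q : ℤ) (x : α) : ℤ := ⌊q * fract (x + 1 / 2)⌋

theorem roundThreshold_nonneg {q : ℤ} (hq : 0 < q) (x : α) : 0 ≤ roundThreshold q x :=
  floor_nonneg.mpr (mul_nonneg (by exact_mod_cast hq.le) (fract_nonneg _))

theorem roundThreshold_lt {q : ℤ} (hq : 0 < q) (x : α) : roundThreshold q x < q :=
  floor_lt.mpr (mul_lt_of_lt_one_right (by exact_mod_cast hq) (fract_lt_one _))

theorem div_le_fract_iff_le_roundThreshold {q : ℤ} (hq : 0 < q) (r : ℤ) (x : α) :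
    (r : α) / q ≤ fract (x + 1 / 2) ↔ r ≤ roundThreshold q x := by
  rw [roundThreshold, le_floor, div_le_iff₀ (by exact_mod_cast hq), mul_comm]

theorem round_sub_intCast_div {q : ℤ} (hq : 0 < q) (x : α) (t : ℤ) :
    round (x - t / q) =
      round x - ⌊(t : α) / q⌋ - if t % q ≤ roundThreshold q x then 0 else 1 := by
  have hsplit : x - t / q = (x - fract ((t : α) / q)) - ⌊(t : α) / q⌋ := by
    rw [Int.fract]; ring
  rw [hsplit, round_sub_intCast,
    round_sub_of_nonneg_of_lt_one x (fract_nonneg _) (fract_lt_one _),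
    fract_intCast_div_intCast hq]
  simp only [div_le_fract_iff_le_roundThreshold hq]
  ring

theorem round_sub_div_eq_round_iff {q : ℤ} (hq : 0 < q) (x : α) {r : ℤ} (hr₀ : 0 ≤ r)
    (hr : r < q) : round (x - r / q) = round x ↔ r ≤ roundThreshold q x := by
  have hq' : (0 : α) < q := by exact_mod_cast hq
  have hfloor : ⌊(r : α) / q⌋ = 0 :=
    floor_eq_zero_iff.mpr ⟨by positivity, (div_lt_one hq').mpr (by exact_mod_cast hr)⟩
  rw [round_sub_intCast_div hq, hfloor, emod_eq_of_lt hr₀ hr]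
  split_ifs with h <;> simp [h]

theorem stmt16 (q : ℤ) (hq : 1 ≤ q) (x : ℝ) :
    ∃ s : ℤ, 0 ≤ s ∧ s < q ∧
      round (x - (s : ℝ)/(q : ℝ)) = round x ∧
      (∀ s' : ℤ, 0 ≤ s' → s' < q →
        round (x - (s' : ℝ)/(q : ℝ)) = round x → s' ≤ s) ∧
      ∀ t : ℤ,
        (round (x - (t : ℝ)/(q : ℝ)) = round x - ⌊(t : ℝ)/(q : ℝ)⌋ ∨
         round (x - (t : ℝ)/(q : ℝ)) = round x - ⌊(t : ℝ)/(q : ℝ)⌋ - 1) ∧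
        (round (x - (t : ℝ)/(q : ℝ)) = round x - ⌊(t : ℝ)/(q : ℝ)⌋ ↔ t % q ≤ s) := by
  have hq₀ : 0 < q := hq
  have hs₀ := roundThreshold_nonneg hq₀ x
  have hsq := roundThreshold_lt hq₀ x
  refine ⟨roundThreshold q x, hs₀, hsq,
    (round_sub_div_eq_round_iff hq₀ x hs₀ hsq).mpr le_rfl,
    fun s' h₀ h₁ h ↦ (round_sub_div_eq_round_iff hq₀ x h₀ h₁).mp h, fun t ↦ ?_⟩
  rw [round_sub_intCast_div hq₀]
  split_ifs with h <;> simp [h]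
end
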